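/- arXiv:1403.3006 — 3 statements merged into one kernel-verified Lean document; each statement's English description precedes it below -/
import Mathlib

section
/- Let f and g be real-valued functions of two real variables that are defined, twice differentiable, and infinitely small of the second order in some neighborhood of the point (x₀, y₀), with all second-order partial derivatives at (x₀,y₀) nonzero. If the double limit lim_{(x,y)→(x₀,y₀)} f(x,y)/g(x,y) exists and equals a nonzero number k, then f''_xx(x₀,y₀)/g''_xx(x₀,y₀) = f''_xy(x₀,y₀)/g''_xy(x₀,y₀) = f''_yx(x₀,y₀)/g''_yx(x₀,y₀) = f''_yy(x₀,y₀)/g''_yy(x₀,y₀) = k. -/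
open Filter Topology

/-!
Along a line `t ↦ p + t • v`, the vanishing of `f` and of its first derivative at `p` and
L'Hôpital's rule give `f (p + t • v) / t ^ 2 → f''(p) v v / 2`, and likewise for `g`. Since
`f / g → k ≠ 0`, `g` has no zeros in a punctured neighbourhood of `p`, so `f = (f / g) * g`
there and hence `f''(p) v v = k * g''(p) v v` for every direction `v`. Both second derivatives
are symmetric bilinear forms, so polarization upgrades this to `f''(p) = k • g''(p)`; the
second partial derivatives are entries of these forms.
-/

theorem tendsto_div_sq_of_hasDerivAt {φ φ' : ℝ → ℝ} {a : ℝ}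
    (hφ : ∀ᶠ t in 𝓝 0, HasDerivAt φ (φ' t) t) (hφ0 : φ 0 = 0) (hφ'0 : φ' 0 = 0)
    (hφ' : HasDerivAt φ' a 0) :
    Tendsto (fun t => φ t / t ^ 2) (𝓝[≠] 0) (𝓝 (a / 2)) := by
  have hslope : Tendsto (fun t => φ' t / (2 * t)) (𝓝[≠] 0) (𝓝 (a / 2)) := by
    have := (hasDerivAt_iff_tendsto_slope_zero.1 hφ').div_const 2
    refine this.congr fun t => ?_
    simp only [zero_add, hφ'0, sub_zero, smul_eq_mul]
    ring
  have hφc : Tendsto φ (𝓝[≠] 0) (𝓝 0) :=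
    (hφ0 ▸ hφ.self_of_nhds.continuousAt.tendsto).mono_left nhdsWithin_le_nhds
  have hsq : Tendsto (fun t : ℝ => t ^ 2) (𝓝[≠] 0) (𝓝 0) :=
    ((continuous_pow 2).tendsto' 0 0 (zero_pow two_ne_zero)).mono_left nhdsWithin_le_nhds
  refine HasDerivAt.lhopital_zero_nhdsNE (nhdsWithin_le_nhds hφ)
    (Eventually.of_forall fun t => by simpa [mul_comm] using hasDerivAt_pow 2 t) ?_ hφc hsq hslope
  filter_upwards [self_mem_nhdsWithin] with t ht using mul_ne_zero two_ne_zero ht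

theorem fderiv_apply_const_eq_fderiv_fderiv {𝕜 E F : Type*} [NontriviallyNormedField 𝕜]
    [NormedAddCommGroup E] [NormedSpace 𝕜 E] [NormedAddCommGroup F] [NormedSpace 𝕜 F]
    {f : E → F} {p : E} (hf' : DifferentiableAt 𝕜 (fderiv 𝕜 f) p) (u w : E) :
    fderiv 𝕜 (fun q => fderiv 𝕜 f q u) p w = fderiv 𝕜 (fderiv 𝕜 f) p w u := by
  simp [(hf'.hasFDerivAt.clm_apply (hasFDerivAt_const u p)).fderiv]

section

variable {E : Type*} [NormedAddCommGroup E] [NormedSpace ℝ E]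

theorem tendsto_add_smul_nhdsNE (p : E) {v : E} (hv : v ≠ 0) :
    Tendsto (fun t : ℝ => p + t • v) (𝓝[≠] 0) (𝓝[≠] p) := by
  refine tendsto_nhdsWithin_of_tendsto_nhds_of_eventually_within _ ?_ ?_
  · have : Continuous (fun t : ℝ => p + t • v) := by fun_prop
    simpa using this.tendsto 0 |>.mono_left nhdsWithin_le_nhds
  · filter_upwards [self_mem_nhdsWithin] with t ht
    simpa [smul_eq_zero, hv] using ht

theorem tendsto_comp_add_smul_div_sq {f : E → ℝ} {p : E}
    (hf : ∀ᶠ q in 𝓝 p, DifferentiableAt ℝ f q) (hf' : DifferentiableAt ℝ (fderiv ℝ f) p)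
    (hfp : f p = 0) (hdf : fderiv ℝ f p = 0) (v : E) :
    Tendsto (fun t : ℝ => f (p + t • v) / t ^ 2) (𝓝[≠] 0)
      (𝓝 (fderiv ℝ (fderiv ℝ f) p v v / 2)) := by
  have hline : ∀ t : ℝ, HasDerivAt (fun t : ℝ => p + t • v) v t := fun t => by
    simpa using ((hasDerivAt_id t).smul_const v).const_add p
  have hline0 : Tendsto (fun t : ℝ => p + t • v) (𝓝 0) (𝓝 p) := by
    have : Continuous (fun t : ℝ => p + t • v) := by fun_prop
    simpa using this.tendsto 0
  refine tendsto_div_sq_of_hasDerivAt (φ' := fun t => fderiv ℝ f (p + t • v) v) ?_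
    (by simpa using hfp) (by simp [hdf]) ?_
  · filter_upwards [hline0.eventually hf] with t ht
    exact ht.hasFDerivAt.comp_hasDerivAt t (hline t)
  · have h := hf'.hasFDerivAt.comp_hasDerivAt_of_eq 0 (hline 0) (by simp)
    exact (ContinuousLinearMap.apply ℝ ℝ v).hasFDerivAt.comp_hasDerivAt 0 h

theorem fderiv_fderiv_apply_self_eq_mul_of_tendsto_div {f g : E → ℝ} {p : E} {k : ℝ}
    (hf : ∀ᶠ q in 𝓝 p, DifferentiableAt ℝ f q) (hg : ∀ᶠ q in 𝓝 p, DifferentiableAt ℝ g q)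
    (hf' : DifferentiableAt ℝ (fderiv ℝ f) p) (hg' : DifferentiableAt ℝ (fderiv ℝ g) p)
    (hfp : f p = 0) (hgp : g p = 0) (hdf : fderiv ℝ f p = 0) (hdg : fderiv ℝ g p = 0)
    (hk : k ≠ 0) (hlim : Tendsto (fun q => f q / g q) (𝓝[≠] p) (𝓝 k)) (v : E) :
    fderiv ℝ (fderiv ℝ f) p v v = k * fderiv ℝ (fderiv ℝ g) p v v := by
  rcases eq_or_ne v 0 with rfl | hv
  · simp
  have hline := tendsto_add_smul_nhdsNE p hv
  -- `f q / 0 = 0`, so the limit `k ≠ 0` keeps `g` away from zero near `p`.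
  have hg_ne : ∀ᶠ q in 𝓝[≠] p, g q ≠ 0 :=
    (hlim.eventually_ne hk).mono fun q hq => (div_ne_zero_iff.1 hq).2
  have hF := tendsto_comp_add_smul_div_sq hf hf' hfp hdf v
  have hG := tendsto_comp_add_smul_div_sq hg hg' hgp hdg v
  have hF' : Tendsto (fun t : ℝ => f (p + t • v) / t ^ 2) (𝓝[≠] 0)
      (𝓝 (k * (fderiv ℝ (fderiv ℝ g) p v v / 2))) := by
    refine ((hlim.comp hline).mul hG).congr' ?_
    filter_upwards [hline.eventually hg_ne] with t ht
    exact div_mul_div_cancel₀ ht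
  linarith [tendsto_nhds_unique hF hF']

theorem ContinuousLinearMap.eq_of_symm_of_apply_self_eq {F : Type*} [NormedAddCommGroup F]
    [NormedSpace ℝ F] {B C : E →L[ℝ] E →L[ℝ] F} (hB : ∀ u w, B u w = B w u)
    (hC : ∀ u w, C u w = C w u) (h : ∀ v, B v v = C v v) : B = C := by
  ext u w
  have huw := h (u + w)
  simp only [map_add, add_apply, h u, h w, hB w u, hC w u] at huw
  linear_combination (norm := module) (1 / 2 : ℝ) • huw

theorem fderiv_fderiv_eq_smul_of_tendsto_div {f g : E → ℝ} {p : E} {k : ℝ}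
    (hf : ∀ᶠ q in 𝓝 p, DifferentiableAt ℝ f q) (hg : ∀ᶠ q in 𝓝 p, DifferentiableAt ℝ g q)
    (hf' : DifferentiableAt ℝ (fderiv ℝ f) p) (hg' : DifferentiableAt ℝ (fderiv ℝ g) p)
    (hfp : f p = 0) (hgp : g p = 0) (hdf : fderiv ℝ f p = 0) (hdg : fderiv ℝ g p = 0)
    (hk : k ≠ 0) (hlim : Tendsto (fun q => f q / g q) (𝓝[≠] p) (𝓝 k)) :
    fderiv ℝ (fderiv ℝ f) p = k • fderiv ℝ (fderiv ℝ g) p := by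
  have hsymm {h : E → ℝ} (hh : ∀ᶠ q in 𝓝 p, DifferentiableAt ℝ h q)
      (hh' : DifferentiableAt ℝ (fderiv ℝ h) p) (u w : E) :
      fderiv ℝ (fderiv ℝ h) p u w = fderiv ℝ (fderiv ℝ h) p w u :=
    second_derivative_symmetric_of_eventually (hh.mono fun q hq => hq.hasFDerivAt)
      hh'.hasFDerivAt u w
  refine ContinuousLinearMap.eq_of_symm_of_apply_self_eq (hsymm hf hf') (fun u w => ?_) fun v => ?_
  · simp only [smul_apply, hsymm hg hg' u w]
  · simpa using
      fderiv_fderiv_apply_self_eq_mul_of_tendsto_div hf hg hf' hg' hfp hgp hdf hdg hk hlim v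

end

theorem secondOrder_lhopital_necessity_general (f g : ℝ × ℝ → ℝ) (x₀ y₀ : ℝ)
    (hf : ∀ᶠ q in 𝓝 (x₀, y₀), DifferentiableAt ℝ f q)
    (hg : ∀ᶠ q in 𝓝 (x₀, y₀), DifferentiableAt ℝ g q)
    (hf' : ∀ᶠ q in 𝓝 (x₀, y₀), DifferentiableAt ℝ (fderiv ℝ f) q)
    (hg' : ∀ᶠ q in 𝓝 (x₀, y₀), DifferentiableAt ℝ (fderiv ℝ g) q)
    (hf0 : Tendsto f (𝓝[≠] (x₀, y₀)) (𝓝 0))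
    (hg0 : Tendsto g (𝓝[≠] (x₀, y₀)) (𝓝 0))
    (hdf : fderiv ℝ f (x₀, y₀) = 0)
    (hdg : fderiv ℝ g (x₀, y₀) = 0)
    (hgxx : fderiv ℝ (fun q => fderiv ℝ g q (1, 0)) (x₀, y₀) (1, 0) ≠ 0)
    (hgxy : fderiv ℝ (fun q => fderiv ℝ g q (1, 0)) (x₀, y₀) (0, 1) ≠ 0)
    (hgyx : fderiv ℝ (fun q => fderiv ℝ g q (0, 1)) (x₀, y₀) (1, 0) ≠ 0)
    (hgyy : fderiv ℝ (fun q => fderiv ℝ g q (0, 1)) (x₀, y₀) (0, 1) ≠ 0)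
    (k : ℝ) (hk : k ≠ 0)
    (hlim : Tendsto (fun q => f q / g q) (𝓝[≠] (x₀, y₀)) (𝓝 k)) :
    fderiv ℝ (fun q => fderiv ℝ f q (1, 0)) (x₀, y₀) (1, 0) /
      fderiv ℝ (fun q => fderiv ℝ g q (1, 0)) (x₀, y₀) (1, 0) = k ∧
    fderiv ℝ (fun q => fderiv ℝ f q (1, 0)) (x₀, y₀) (0, 1) /
      fderiv ℝ (fun q => fderiv ℝ g q (1, 0)) (x₀, y₀) (0, 1) = k ∧
    fderiv ℝ (fun q => fderiv ℝ f q (0, 1)) (x₀, y₀) (1, 0) /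
      fderiv ℝ (fun q => fderiv ℝ g q (0, 1)) (x₀, y₀) (1, 0) = k ∧
    fderiv ℝ (fun q => fderiv ℝ f q (0, 1)) (x₀, y₀) (0, 1) /
      fderiv ℝ (fun q => fderiv ℝ g q (0, 1)) (x₀, y₀) (0, 1) = k := by
  have hzero {h : ℝ × ℝ → ℝ} (hd : ∀ᶠ q in 𝓝 (x₀, y₀), DifferentiableAt ℝ h q)
      (h0 : Tendsto h (𝓝[≠] (x₀, y₀)) (𝓝 0)) : h (x₀, y₀) = 0 :=
    tendsto_nhds_unique (hd.self_of_nhds.continuousAt.tendsto.mono_left nhdsWithin_le_nhds) h0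
  have hQ := fderiv_fderiv_eq_smul_of_tendsto_div hf hg hf'.self_of_nhds hg'.self_of_nhds
    (hzero hf hf0) (hzero hg hg0) hdf hdg hk hlim
  have hratio (u w : ℝ × ℝ) (hne : fderiv ℝ (fun q => fderiv ℝ g q u) (x₀, y₀) w ≠ 0) :
      fderiv ℝ (fun q => fderiv ℝ f q u) (x₀, y₀) w /
        fderiv ℝ (fun q => fderiv ℝ g q u) (x₀, y₀) w = k := by
    rw [fderiv_apply_const_eq_fderiv_fderiv hg'.self_of_nhds] at hne ⊢
    rw [fderiv_apply_const_eq_fderiv_fderiv hf'.self_of_nhds, hQ, smul_apply, smul_apply, smul_eq_mul, mul_div_cancel_right₀ _ hne]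
  exact ⟨hratio _ _ hgxx, hratio _ _ hgxy, hratio _ _ hgyx, hratio _ _ hgyy⟩

/-- **Necessity direction of Theorem 2.** If the double limit of `f/g` at `(x₀,y₀)`
exists and equals a nonzero `k`, then all four ratios of corresponding second-order
partial derivatives of `f` and `g` at `(x₀,y₀)` equal `k`. -/
theorem secondOrder_lhopital_necessity (f g : ℝ × ℝ → ℝ) (x₀ y₀ : ℝ)
    (hf : ∀ᶠ q in 𝓝 (x₀, y₀), DifferentiableAt ℝ f q)
    (hg : ∀ᶠ q in 𝓝 (x₀, y₀), DifferentiableAt ℝ g q)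
    (hf' : ∀ᶠ q in 𝓝 (x₀, y₀), DifferentiableAt ℝ (fderiv ℝ f) q)
    (hg' : ∀ᶠ q in 𝓝 (x₀, y₀), DifferentiableAt ℝ (fderiv ℝ g) q)
    (hf0 : Tendsto f (𝓝[≠] (x₀, y₀)) (𝓝 0))
    (hg0 : Tendsto g (𝓝[≠] (x₀, y₀)) (𝓝 0))
    (hdf : fderiv ℝ f (x₀, y₀) = 0)
    (hdg : fderiv ℝ g (x₀, y₀) = 0)
    (hfxx : fderiv ℝ (fun q => fderiv ℝ f q (1, 0)) (x₀, y₀) (1, 0) ≠ 0)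
    (hfxy : fderiv ℝ (fun q => fderiv ℝ f q (1, 0)) (x₀, y₀) (0, 1) ≠ 0)
    (hfyx : fderiv ℝ (fun q => fderiv ℝ f q (0, 1)) (x₀, y₀) (1, 0) ≠ 0)
    (hfyy : fderiv ℝ (fun q => fderiv ℝ f q (0, 1)) (x₀, y₀) (0, 1) ≠ 0)
    (hgxx : fderiv ℝ (fun q => fderiv ℝ g q (1, 0)) (x₀, y₀) (1, 0) ≠ 0)
    (hgxy : fderiv ℝ (fun q => fderiv ℝ g q (1, 0)) (x₀, y₀) (0, 1) ≠ 0)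
    (hgyx : fderiv ℝ (fun q => fderiv ℝ g q (0, 1)) (x₀, y₀) (1, 0) ≠ 0)
    (hgyy : fderiv ℝ (fun q => fderiv ℝ g q (0, 1)) (x₀, y₀) (0, 1) ≠ 0)
    (k : ℝ) (hk : k ≠ 0)
    (hlim : Tendsto (fun q => f q / g q) (𝓝[≠] (x₀, y₀)) (𝓝 k)) :
    fderiv ℝ (fun q => fderiv ℝ f q (1, 0)) (x₀, y₀) (1, 0) /
      fderiv ℝ (fun q => fderiv ℝ g q (1, 0)) (x₀, y₀) (1, 0) = k ∧
    fderiv ℝ (fun q => fderiv ℝ f q (1, 0)) (x₀, y₀) (0, 1) /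
      fderiv ℝ (fun q => fderiv ℝ g q (1, 0)) (x₀, y₀) (0, 1) = k ∧
    fderiv ℝ (fun q => fderiv ℝ f q (0, 1)) (x₀, y₀) (1, 0) /
      fderiv ℝ (fun q => fderiv ℝ g q (0, 1)) (x₀, y₀) (1, 0) = k ∧
    fderiv ℝ (fun q => fderiv ℝ f q (0, 1)) (x₀, y₀) (0, 1) /
      fderiv ℝ (fun q => fderiv ℝ g q (0, 1)) (x₀, y₀) (0, 1) = k :=
  secondOrder_lhopital_necessity_general f g x₀ y₀ hf hg hf' hg' hf0 hg0 hdf hdg hgxx hgxy hgyx hgyy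
    k hk hlim
end

section
/- Let f and g be real-valued functions of two real variables, defined and differentiable in a neighborhood of (x₀,y₀), with f(x₀,y₀) = g(x₀,y₀) = 0, and suppose f'_x(x₀,y₀) = 0 while f'_y(x₀,y₀), g'_x(x₀,y₀), g'_y(x₀,y₀) are all nonzero. Then the double limit lim_{(x,y)→(x₀,y₀)} f(x,y)/g(x,y) does not exist; in particular, along the line x = x₀ the limit of f/g equals f'_y(x₀,y₀)/g'_y(x₀,y₀) ≠ 0, while along every path with Δy = o(Δx) the limit of f/g equals 0. -/
/-!
Restricting `f` and `g` to a curve through `(x₀, y₀)` with velocity `u` reduces the ratio to a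
one-variable quotient of functions vanishing at the base point, whose limit is `f' u / g' u`.
The vertical line has velocity `(0, 1)`, giving `f'_y / g'_y ≠ 0`; a path with `Δy = o(Δx)` has
velocity `(1, 0)`, giving `f'_x / g'_x = 0`. A double limit would have to equal both.
-/

open Filter Topology Asymptotics

theorem tendsto_div_nhdsNE_of_hasDerivAt {𝕜 : Type*} [NontriviallyNormedField 𝕜]
    {f g : 𝕜 → 𝕜} {f' g' a : 𝕜} (hf : HasDerivAt f f' a) (hg : HasDerivAt g g' a)
    (hfa : f a = 0) (hga : g a = 0) (hg' : g' ≠ 0) :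
    Tendsto (fun x => f x / g x) (𝓝[≠] a) (𝓝 (f' / g')) := by
  refine ((hasDerivAt_iff_tendsto_slope.mp hf).div
    (hasDerivAt_iff_tendsto_slope.mp hg) hg').congr' ?_
  filter_upwards [self_mem_nhdsWithin] with x hx
  rw [Pi.div_apply, slope_def_field, slope_def_field, hfa, hga, sub_zero, sub_zero,
    div_div_div_cancel_right₀ (sub_ne_zero.mpr hx)]

theorem tendsto_div_comp_of_hasDerivAt {𝕜 E : Type*} [NontriviallyNormedField 𝕜]
    [NormedAddCommGroup E] [NormedSpace 𝕜 E] {f g : E → 𝕜} {f' g' : E →L[𝕜] 𝕜} {p u : E}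
    {c : 𝕜 → E} {t₀ : 𝕜} (hf : HasFDerivAt f f' p) (hg : HasFDerivAt g g' p)
    (hc : HasDerivAt c u t₀) (hct₀ : c t₀ = p) (hfp : f p = 0) (hgp : g p = 0)
    (hgu : g' u ≠ 0) :
    Tendsto (fun t => f (c t) / g (c t)) (𝓝[≠] t₀) (𝓝 (f' u / g' u)) := by
  subst hct₀
  exact tendsto_div_nhdsNE_of_hasDerivAt (hf.comp_hasDerivAt t₀ hc)
    (hg.comp_hasDerivAt t₀ hc) hfp hgp hgu

theorem apply_zero_eq_zero_of_isLittleO_id {𝕜 F : Type*} [NormedField 𝕜] [NormedAddCommGroup F]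
    {γ : 𝕜 → F} (hγ : γ =o[𝓝 0] fun t => t) : γ 0 = 0 :=
  hγ.isBigO.eq_zero_imp.self_of_nhds rfl

theorem hasDerivAt_zero_of_isLittleO_id {𝕜 F : Type*} [NontriviallyNormedField 𝕜]
    [NormedAddCommGroup F] [NormedSpace 𝕜 F] {γ : 𝕜 → F} (hγ : γ =o[𝓝 0] fun t => t) :
    HasDerivAt γ 0 0 :=
  HasDerivAt.of_isLittleO (by simpa [apply_zero_eq_zero_of_isLittleO_id hγ] using hγ)

theorem eq_of_tendsto_comp_of_hasDerivAt {𝕜 E β : Type*} [NontriviallyNormedField 𝕜]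
    [NormedAddCommGroup E] [NormedSpace 𝕜 E] [TopologicalSpace β] [T2Space β]
    {F : E → β} {c : 𝕜 → E} {u : E} {t₀ : 𝕜} {L l : β}
    (hF : Tendsto F (𝓝[≠] c t₀) (𝓝 L)) (hc : HasDerivAt c u t₀) (hu : u ≠ 0)
    (hFc : Tendsto (fun t => F (c t)) (𝓝[≠] t₀) (𝓝 l)) : L = l :=
  tendsto_nhds_unique (hF.comp (hc.tendsto_nhdsNE hu)) hFc

/-- **Case (1) after Theorem 1.** If `f(x₀,y₀) = g(x₀,y₀) = 0`, `f'_x(x₀,y₀) = 0` and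
`f'_y, g'_x, g'_y` are nonzero at `(x₀,y₀)`, then the double limit of `f/g` at
`(x₀,y₀)` does not exist; along the line `x = x₀` the limit equals
`f'_y(x₀,y₀)/g'_y(x₀,y₀) ≠ 0`, while along every path `Δy = o(Δx)` the limit is `0`. -/
theorem one_partial_vanishes_no_limit (f g : ℝ × ℝ → ℝ) (x₀ y₀ : ℝ)
    (hf : ∀ᶠ q in 𝓝 (x₀, y₀), DifferentiableAt ℝ f q)
    (hg : ∀ᶠ q in 𝓝 (x₀, y₀), DifferentiableAt ℝ g q)
    (hf0 : f (x₀, y₀) = 0) (hg0 : g (x₀, y₀) = 0)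
    (hfx : fderiv ℝ f (x₀, y₀) (1, 0) = 0)
    (hfy : fderiv ℝ f (x₀, y₀) (0, 1) ≠ 0)
    (hgx : fderiv ℝ g (x₀, y₀) (1, 0) ≠ 0)
    (hgy : fderiv ℝ g (x₀, y₀) (0, 1) ≠ 0) :
    (¬ ∃ L : ℝ, Tendsto (fun q => f q / g q) (𝓝[≠] (x₀, y₀)) (𝓝 L)) ∧
    Tendsto (fun y => f (x₀, y) / g (x₀, y)) (𝓝[≠] y₀)
      (𝓝 (fderiv ℝ f (x₀, y₀) (0, 1) / fderiv ℝ g (x₀, y₀) (0, 1))) ∧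
    fderiv ℝ f (x₀, y₀) (0, 1) / fderiv ℝ g (x₀, y₀) (0, 1) ≠ 0 ∧
    (∀ γ : ℝ → ℝ, γ =o[𝓝 (0 : ℝ)] (fun t => t) →
      Tendsto (fun t => f (x₀ + t, y₀ + γ t) / g (x₀ + t, y₀ + γ t))
        (𝓝[≠] (0 : ℝ)) (𝓝 0)) := by
  have hfd := hf.self_of_nhds.hasFDerivAt
  have hgd := hg.self_of_nhds.hasFDerivAt
  have hline : HasDerivAt (fun y => (x₀, y)) ((0 : ℝ), (1 : ℝ)) y₀ :=
    (hasDerivAt_const y₀ x₀).prodMk (hasDerivAt_id y₀)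
  have hline_lim := tendsto_div_comp_of_hasDerivAt hfd hgd hline rfl hf0 hg0 hgy
  have hpath (γ : ℝ → ℝ) (hγ : γ =o[𝓝 0] fun t => t) :
      HasDerivAt (fun t => (x₀ + t, y₀ + γ t)) ((1 : ℝ), (0 : ℝ)) 0 :=
    ((hasDerivAt_id 0).const_add x₀).prodMk ((hasDerivAt_zero_of_isLittleO_id hγ).const_add y₀)
  have hpath_lim (γ : ℝ → ℝ) (hγ : γ =o[𝓝 0] fun t => t) :
      Tendsto (fun t => f (x₀ + t, y₀ + γ t) / g (x₀ + t, y₀ + γ t)) (𝓝[≠] 0) (𝓝 0) := by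
    simpa [hfx] using tendsto_div_comp_of_hasDerivAt hfd hgd (hpath γ hγ)
      (by simp [apply_zero_eq_zero_of_isLittleO_id hγ]) hf0 hg0 hgx
  refine ⟨?_, hline_lim, div_ne_zero hfy hgy, hpath_lim⟩
  rintro ⟨L, hL⟩
  have hL_line := eq_of_tendsto_comp_of_hasDerivAt hL hline (by simp) hline_lim
  have hL_axis := eq_of_tendsto_comp_of_hasDerivAt (by simpa using hL)
    (hpath 0 (isLittleO_zero _ _)) (by simp) (hpath_lim 0 (isLittleO_zero _ _))
  exact div_ne_zero hfy hgy (hL_line.symm.trans hL_axis)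
end

section
/- Let f and g be real-valued functions of two real variables, defined and differentiable in a neighborhood of (x₀,y₀), with f(x₀,y₀) = g(x₀,y₀) = 0, and suppose f'_x(x₀,y₀) = g'_x(x₀,y₀) = 0 while f'_y(x₀,y₀) and g'_y(x₀,y₀) are nonzero. Then along every line through (x₀,y₀) of the form x − x₀ = r(y − y₀) (r real), the limit of f(x,y)/g(x,y) as (x,y) → (x₀,y₀) along that line equals f'_y(x₀,y₀)/g'_y(x₀,y₀). -/
open Filter Topology

/-- The elementary case of L'Hôpital's rule: only derivatives at the point itself are needed. -/
theorem tendsto_div_nhdsNE_of_hasDerivAt_s9 {φ ψ : ℝ → ℝ} {a b : ℝ}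
    (hφ : HasDerivAt φ a 0) (hψ : HasDerivAt ψ b 0) (hφ0 : φ 0 = 0) (hψ0 : ψ 0 = 0)
    (hb : b ≠ 0) :
    Tendsto (fun t => φ t / ψ t) (𝓝[≠] 0) (𝓝 (a / b)) := by
  have slope_tendsto {χ : ℝ → ℝ} {c : ℝ} (hχ : HasDerivAt χ c 0) (hχ0 : χ 0 = 0) :
      Tendsto (fun t => χ t / t) (𝓝[≠] 0) (𝓝 c) := by
    simpa [hχ0, div_eq_inv_mul] using hasDerivAt_iff_tendsto_slope_zero.mp hχ
  refine ((slope_tendsto hφ hφ0).div (slope_tendsto hψ hψ0) hb).congr' ?_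
  filter_upwards [self_mem_nhdsWithin] with t (ht : t ≠ 0)
  exact div_div_div_cancel_right₀ ht _ _

theorem hasDerivAt_along_line_of_fderiv_fst_eq_zero {f : ℝ × ℝ → ℝ} {x₀ y₀ : ℝ}
    (hf : DifferentiableAt ℝ f (x₀, y₀)) (hfx : fderiv ℝ f (x₀, y₀) (1, 0) = 0) (r : ℝ) :
    HasDerivAt (fun t : ℝ => f (x₀ + r * t, y₀ + t)) (fderiv ℝ f (x₀, y₀) (0, 1)) 0 := by
  have hline : HasDerivAt (fun t : ℝ => ((x₀ + r * t, y₀ + t) : ℝ × ℝ)) (r, 1) 0 := by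
    simpa using ((hasDerivAt_id (0 : ℝ)).const_mul r |>.const_add x₀).prodMk
      ((hasDerivAt_id (0 : ℝ)).const_add y₀)
  have hdir : fderiv ℝ f (x₀, y₀) (r, 1) = fderiv ℝ f (x₀, y₀) (0, 1) := by
    have hsplit : ((r, 1) : ℝ × ℝ) = r • (1, 0) + (0, 1) := by simp
    rw [hsplit, map_add, map_smul, hfx, smul_zero, zero_add]
  rw [← hdir]
  exact (by simpa using hf.hasFDerivAt : HasFDerivAt f _ (x₀ + r * 0, y₀ + 0)).comp_hasDerivAt 0 hline

theorem both_x_partials_vanish_limit_along_lines_general (f g : ℝ × ℝ → ℝ) (x₀ y₀ : ℝ)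
    (hf : ∀ᶠ q in 𝓝 (x₀, y₀), DifferentiableAt ℝ f q)
    (hg : ∀ᶠ q in 𝓝 (x₀, y₀), DifferentiableAt ℝ g q)
    (hf0 : f (x₀, y₀) = 0) (hg0 : g (x₀, y₀) = 0)
    (hfx : fderiv ℝ f (x₀, y₀) (1, 0) = 0)
    (hgx : fderiv ℝ g (x₀, y₀) (1, 0) = 0)
    (hgy : fderiv ℝ g (x₀, y₀) (0, 1) ≠ 0) :
    ∀ r : ℝ,
      Tendsto (fun t : ℝ => f (x₀ + r * t, y₀ + t) / g (x₀ + r * t, y₀ + t))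
        (𝓝[≠] (0 : ℝ))
        (𝓝 (fderiv ℝ f (x₀, y₀) (0, 1) / fderiv ℝ g (x₀, y₀) (0, 1))) := fun r =>
  tendsto_div_nhdsNE_of_hasDerivAt_s9
    (hasDerivAt_along_line_of_fderiv_fst_eq_zero hf.self_of_nhds hfx r)
    (hasDerivAt_along_line_of_fderiv_fst_eq_zero hg.self_of_nhds hgx r)
    (by simpa using hf0) (by simpa using hg0) hgy

/-- **Case (2) after Theorem 1.** If `f(x₀,y₀) = g(x₀,y₀) = 0`,
`f'_x(x₀,y₀) = g'_x(x₀,y₀) = 0` and `f'_y(x₀,y₀), g'_y(x₀,y₀)` are nonzero, then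
along every line `x - x₀ = r (y - y₀)` through `(x₀,y₀)` the limit of `f/g` equals
`f'_y(x₀,y₀)/g'_y(x₀,y₀)`. -/
theorem both_x_partials_vanish_limit_along_lines (f g : ℝ × ℝ → ℝ) (x₀ y₀ : ℝ)
    (hf : ∀ᶠ q in 𝓝 (x₀, y₀), DifferentiableAt ℝ f q)
    (hg : ∀ᶠ q in 𝓝 (x₀, y₀), DifferentiableAt ℝ g q)
    (hf0 : f (x₀, y₀) = 0) (hg0 : g (x₀, y₀) = 0)
    (hfx : fderiv ℝ f (x₀, y₀) (1, 0) = 0)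
    (hgx : fderiv ℝ g (x₀, y₀) (1, 0) = 0)
    (hfy : fderiv ℝ f (x₀, y₀) (0, 1) ≠ 0)
    (hgy : fderiv ℝ g (x₀, y₀) (0, 1) ≠ 0) :
    ∀ r : ℝ,
      Tendsto (fun t : ℝ => f (x₀ + r * t, y₀ + t) / g (x₀ + r * t, y₀ + t))
        (𝓝[≠] (0 : ℝ))
        (𝓝 (fderiv ℝ f (x₀, y₀) (0, 1) / fderiv ℝ g (x₀, y₀) (0, 1))) :=
  both_x_partials_vanish_limit_along_lines_general f g x₀ y₀ hf hg hf0 hg0 hfx hgx hgy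
end
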